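/- Let θ > 0 and n ∈ (0,1). Then problem (P) has at most one solution: if H₁ and H₂ are both solutions of (P), then H₁ = H₂ on [0,1]. -/

import Mathlib

open Set Filter

/-- Problem (P): the similarity boundary-value problem for the thin-film equation. -/
def IsSolP (n θ : ℝ) (H : ℝ → ℝ) : Prop :=
  ContDiffOn ℝ 1 H (Set.Icc 0 1) ∧
  ContDiffOn ℝ 3 H (Set.Ioo 0 1) ∧
  (∀ x ∈ Set.Ioo (0:ℝ) 1, 0 < H x) ∧
  (∀ x ∈ Set.Ioo (0:ℝ) 1, H x ^ (n - 1) * deriv^[3] H x = -1 + x) ∧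
  H 0 = 0 ∧
  derivWithin H (Set.Icc 0 1) 0 = θ ∧
  derivWithin H (Set.Icc 0 1) 1 = 0

/-!
If `H₁, H₂` solve (P) and `t H₁ ≤ H₂` for some `t ∈ [0, 1]`, then `D = H₂ - t H₁` satisfies
`D''' = (x - 1) (H₂^(1-n) - t H₁^(1-n)) ≤ 0`, because `t ≤ t^(1-n)` when `0 ≤ n ≤ 1`.
So `D'` is concave with `D'(0) = (1 - t) θ` and `D'(1) = 0`, whence `D' ≥ (1 - t) θ (1 - x)` and
`D ≥ (1 - t) θ (x - x²/2) ≥ (1 - t) θ x / 2`. As `H₁ ≤ C x`, this improves `t` to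
`t + (1 - t) θ / (2C)`; iterating from `t = 0` drives `t` to `1`, so `H₁ ≤ H₂`, and by symmetry
`H₁ = H₂`.
-/

lemma mul_rpow_le_rpow_of_mul_le {p t a b : ℝ} (hp₀ : 0 ≤ p) (hp₁ : p ≤ 1) (ht₀ : 0 ≤ t)
    (ht₁ : t ≤ 1) (ha : 0 ≤ a) (hab : t * a ≤ b) : t * a ^ p ≤ b ^ p :=
  calc t * a ^ p ≤ t ^ p * a ^ p :=
        mul_le_mul_of_nonneg_right (Real.self_le_rpow_of_le_one ht₀ ht₁ hp₁) (by positivity)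
    _ = (t * a) ^ p := (Real.mul_rpow ht₀ ha).symm
    _ ≤ b ^ p := Real.rpow_le_rpow (by positivity) hab hp₀

lemma ConcaveOn.one_sub_mul_add_mul_le {g : ℝ → ℝ} (hg : ConcaveOn ℝ (Icc 0 1) g) {x : ℝ}
    (hx : x ∈ Icc (0:ℝ) 1) : (1 - x) * g 0 + x * g 1 ≤ g x := by
  simpa using hg.2 (left_mem_Icc.2 zero_le_one) (right_mem_Icc.2 zero_le_one)
    (sub_nonneg.2 hx.2) hx.1 (sub_add_cancel 1 x)

lemma concaveOn_derivWithin_of_iterate_deriv_three_nonpos {D : ℝ → ℝ}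
    (hD₁ : ContDiffOn ℝ 1 D (Icc 0 1)) (hD₃ : ContDiffOn ℝ 3 D (Ioo 0 1))
    (hD''' : ∀ x ∈ Ioo (0:ℝ) 1, deriv^[3] D x ≤ 0) :
    ConcaveOn ℝ (Icc 0 1) (derivWithin D (Icc 0 1)) := by
  have hg : EqOn (derivWithin D (Icc 0 1)) (deriv D) (Ioo 0 1) := fun y hy =>
    derivWithin_of_mem_nhds (Icc_mem_nhds hy.1 hy.2)
  have hg' := hg.deriv isOpen_Ioo
  have hD' : ContDiffOn ℝ 2 (deriv D) (Ioo 0 1) := hD₃.deriv_of_isOpen isOpen_Ioo (by norm_num)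
  have hD'' : ContDiffOn ℝ 1 (deriv^[2] D) (Ioo 0 1) :=
    hD'.deriv_of_isOpen isOpen_Ioo (by norm_num)
  refine concaveOn_of_deriv2_nonpos (convex_Icc 0 1)
    (hD₁.continuousOn_derivWithin (uniqueDiffOn_Icc zero_lt_one) le_rfl) ?_ ?_ ?_ <;>
    rw [interior_Icc]
  · exact (hD'.differentiableOn (by norm_num)).congr hg
  · exact (hD''.differentiableOn one_ne_zero).congr hg'
  · intro y hy
    rw [Function.iterate_succ_apply, Function.iterate_one, hg'.deriv isOpen_Ioo hy]
    exact hD''' y hy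

theorem derivWithin_zero_mul_le_of_iterate_deriv_three_nonpos {D : ℝ → ℝ}
    (hD₁ : ContDiffOn ℝ 1 D (Icc 0 1)) (hD₃ : ContDiffOn ℝ 3 D (Ioo 0 1))
    (hD''' : ∀ x ∈ Ioo (0:ℝ) 1, deriv^[3] D x ≤ 0) (h0 : D 0 = 0)
    (h1 : derivWithin D (Icc 0 1) 1 = 0) {x : ℝ} (hx : x ∈ Icc (0:ℝ) 1) :
    derivWithin D (Icc 0 1) 0 * (x - x ^ 2 / 2) ≤ D x := by
  set g := derivWithin D (Icc 0 1)
  have hconc : ConcaveOn ℝ (Icc 0 1) g :=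
    concaveOn_derivWithin_of_iterate_deriv_three_nonpos hD₁ hD₃ hD'''
  have hD : ∀ y ∈ Ioo (0:ℝ) 1, HasDerivAt D (g y) y := fun y hy =>
    ((hD₁.differentiableOn one_ne_zero).differentiableAt
      (Icc_mem_nhds hy.1 hy.2)).hasDerivAt.congr_deriv
      (derivWithin_of_mem_nhds (Icc_mem_nhds hy.1 hy.2)).symm
  have hmono : MonotoneOn (fun y => D y - g 0 * (y - y ^ 2 / 2)) (Icc 0 1) := by
    refine monotoneOn_of_hasDerivWithinAt_nonneg (f' := fun y => g y - g 0 * (1 - y))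
      (convex_Icc 0 1) (hD₁.continuousOn.sub (by fun_prop)) ?_ ?_ <;> rw [interior_Icc]
    · intro y hy
      refine ((hD y hy).sub (((hasDerivAt_id y).sub ((hasDerivAt_pow 2 y).div_const 2)).const_mul
        (g 0)) |>.congr_deriv ?_).hasDerivWithinAt
      simp
    · intro y hy
      have := hconc.one_sub_mul_add_mul_le (Ioo_subset_Icc_self hy)
      rw [h1] at this
      linarith
  simpa [h0] using hmono (left_mem_Icc.2 zero_le_one) hx hx.1

lemma exists_le_mul_of_contDiffOn_Icc {H : ℝ → ℝ} (hH : ContDiffOn ℝ 1 H (Icc 0 1))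
    (h0 : H 0 = 0) : ∃ C, derivWithin H (Icc 0 1) 0 ≤ C ∧ ∀ x ∈ Icc (0:ℝ) 1, H x ≤ C * x := by
  obtain ⟨C, hC⟩ := isCompact_Icc.exists_bound_of_continuousOn
    (hH.continuousOn_derivWithin (uniqueDiffOn_Icc zero_lt_one) le_rfl)
  refine ⟨C, (le_abs_self _).trans (hC 0 (left_mem_Icc.2 zero_le_one)), fun x hx => ?_⟩
  have := (convex_Icc 0 1).norm_image_sub_le_of_norm_derivWithin_le
    (hH.differentiableOn one_ne_zero) hC (left_mem_Icc.2 zero_le_one) hx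
  rw [h0, sub_zero, sub_zero, Real.norm_eq_abs, Real.norm_eq_abs, abs_of_nonneg hx.1] at this
  exact (le_abs_self _).trans this

lemma le_of_forall_mul_le_step {α : Type*} {s : Set α} {f g : α → ℝ} {δ : ℝ} (hδ₀ : 0 < δ)
    (hδ₁ : δ ≤ 1) (hg : ∀ x ∈ s, 0 ≤ g x)
    (hstep : ∀ t ∈ Icc (0:ℝ) 1, (∀ x ∈ s, t * f x ≤ g x) →
      ∀ x ∈ s, (t + (1 - t) * δ) * f x ≤ g x)
    {x : α} (hx : x ∈ s) : f x ≤ g x := by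
  have hiter : ∀ k : ℕ, ∀ y ∈ s, (1 - (1 - δ) ^ k) * f y ≤ g y := by
    intro k
    induction k with
    | zero => simpa using hg
    | succ k ih =>
      have hpow₀ : 0 ≤ (1 - δ) ^ k := pow_nonneg (by linarith) k
      have hpow₁ : (1 - δ) ^ k ≤ 1 := pow_le_one₀ (by linarith) (by linarith)
      rw [show 1 - (1 - δ) ^ (k + 1) = 1 - (1 - δ) ^ k + (1 - (1 - (1 - δ) ^ k)) * δ by ring]
      exact hstep _ ⟨by linarith, by linarith⟩ ih
  have hlim : Tendsto (fun k : ℕ => (1 - (1 - δ) ^ k) * f x) atTop (nhds (f x)) := by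
    simpa using ((tendsto_pow_atTop_nhds_zero_of_lt_one (by linarith) (by linarith)).const_sub
      1).mul_const (f x)
  exact le_of_tendsto' hlim fun k => hiter k x hx

lemma IsSolP.iterate_deriv_three_eq {n θ : ℝ} {H : ℝ → ℝ} (h : IsSolP n θ H) {x : ℝ}
    (hx : x ∈ Ioo (0:ℝ) 1) : deriv^[3] H x = (x - 1) * H x ^ (1 - n) := by
  obtain ⟨-, -, hpos, hode, -⟩ := h
  have hinv : H x ^ (1 - n) * H x ^ (n - 1) = 1 := by
    rw [← Real.rpow_add (hpos x hx)]; norm_num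
  calc deriv^[3] H x = H x ^ (1 - n) * (H x ^ (n - 1) * deriv^[3] H x) := by
        rw [← mul_assoc, hinv, one_mul]
    _ = (x - 1) * H x ^ (1 - n) := by rw [hode x hx]; ring

lemma IsSolP.iterate_deriv_three_sub_mul_nonpos {n θ t : ℝ} {H₁ H₂ : ℝ → ℝ} (hn₀ : 0 ≤ n)
    (hn₁ : n ≤ 1) (h₁ : IsSolP n θ H₁) (h₂ : IsSolP n θ H₂) (ht : t ∈ Icc (0:ℝ) 1)
    (hle : ∀ x ∈ Ioo (0:ℝ) 1, t * H₁ x ≤ H₂ x) {x : ℝ} (hx : x ∈ Ioo (0:ℝ) 1) :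
    deriv^[3] (fun y => H₂ y - t * H₁ y) x ≤ 0 := by
  have hx' := isOpen_Ioo.mem_nhds hx
  rw [← iteratedDeriv_eq_iterate, iteratedDeriv_fun_sub (h₂.2.1.contDiffAt hx')
    (contDiffAt_const.mul (h₁.2.1.contDiffAt hx')), iteratedDeriv_const_mul_field,
    iteratedDeriv_eq_iterate, iteratedDeriv_eq_iterate, h₁.iterate_deriv_three_eq hx,
    h₂.iterate_deriv_three_eq hx, ← mul_left_comm, ← mul_sub]
  exact mul_nonpos_of_nonpos_of_nonneg (by linarith [hx.2]) (sub_nonneg.2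
    (mul_rpow_le_rpow_of_mul_le (by linarith) (by linarith) ht.1 ht.2 (h₁.2.2.1 x hx).le
      (hle x hx)))

theorem IsSolP.one_sub_mul_le_sub_mul_of_mul_le {n θ t : ℝ} {H₁ H₂ : ℝ → ℝ} (hn₀ : 0 ≤ n)
    (hn₁ : n ≤ 1) (h₁ : IsSolP n θ H₁) (h₂ : IsSolP n θ H₂) (ht : t ∈ Icc (0:ℝ) 1)
    (hle : ∀ x ∈ Ioo (0:ℝ) 1, t * H₁ x ≤ H₂ x) {x : ℝ} (hx : x ∈ Icc (0:ℝ) 1) :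
    (1 - t) * θ * (x - x ^ 2 / 2) ≤ H₂ x - t * H₁ x := by
  have hD''' := fun y (hy : y ∈ Ioo (0:ℝ) 1) =>
    h₁.iterate_deriv_three_sub_mul_nonpos hn₀ hn₁ h₂ ht hle hy
  obtain ⟨h₁C1, h₁C3, -, -, h₁0, h₁θ, h₁1⟩ := h₁
  obtain ⟨h₂C1, h₂C3, -, -, h₂0, h₂θ, h₂1⟩ := h₂
  have hD' : ∀ y ∈ Icc (0:ℝ) 1, derivWithin (fun y => H₂ y - t * H₁ y) (Icc 0 1) y =
      derivWithin H₂ (Icc 0 1) y - t * derivWithin H₁ (Icc 0 1) y := fun y hy => by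
    rw [derivWithin_fun_sub (h₂C1.differentiableOn one_ne_zero y hy)
      ((h₁C1.differentiableOn one_ne_zero y hy).const_mul t),
      derivWithin_const_mul _ (h₁C1.differentiableOn one_ne_zero y hy)]
  have := derivWithin_zero_mul_le_of_iterate_deriv_three_nonpos
    (h₂C1.sub (contDiffOn_const.mul h₁C1)) (h₂C3.sub (contDiffOn_const.mul h₁C3)) hD'''
    (by simp [h₁0, h₂0])
    (by rw [hD' 1 (right_mem_Icc.2 zero_le_one), h₁1, h₂1, mul_zero, sub_zero]) hx
  rwa [hD' 0 (left_mem_Icc.2 zero_le_one), h₁θ, h₂θ, ← one_sub_mul] at this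

theorem IsSolP.le_of_isSolP {n θ : ℝ} {H₁ H₂ : ℝ → ℝ} (hn₀ : 0 ≤ n) (hn₁ : n ≤ 1) (hθ : 0 < θ)
    (h₁ : IsSolP n θ H₁) (h₂ : IsSolP n θ H₂) {x : ℝ} (hx : x ∈ Ioo (0:ℝ) 1) : H₁ x ≤ H₂ x := by
  obtain ⟨C, hθC, hC⟩ := exists_le_mul_of_contDiffOn_Icc h₁.1 h₁.2.2.2.2.1
  rw [h₁.2.2.2.2.2.1] at hθC
  have hC₀ : 0 < C := hθ.trans_le hθC
  refine le_of_forall_mul_le_step (δ := θ / (2 * C)) (by positivity) ?_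
    (fun y hy => (h₂.2.2.1 y hy).le) ?_ hx
  · rw [div_le_one (by positivity)]; linarith
  intro t ht hle y hy
  have hy' := Ioo_subset_Icc_self hy
  have hgap := h₁.one_sub_mul_le_sub_mul_of_mul_le hn₀ hn₁ h₂ ht hle hy'
  have hH₁ : θ / (2 * C) * H₁ y ≤ θ * y / 2 :=
    calc θ / (2 * C) * H₁ y ≤ θ / (2 * C) * (C * y) := by gcongr; exact hC y hy'
      _ = θ * y / 2 := by field_simp
  have hq : y / 2 ≤ y - y ^ 2 / 2 := by nlinarith [hy.1, hy.2]
  have ht' : 0 ≤ 1 - t := sub_nonneg.2 ht.2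
  have hH₁' := mul_le_mul_of_nonneg_left hH₁ ht'
  calc (t + (1 - t) * (θ / (2 * C))) * H₁ y
      = t * H₁ y + (1 - t) * (θ / (2 * C) * H₁ y) := by ring
    _ ≤ t * H₁ y + (1 - t) * θ * (y / 2) := by linarith
    _ ≤ t * H₁ y + (1 - t) * θ * (y - y ^ 2 / 2) := by gcongr
    _ ≤ H₂ y := by linarith

/-- Uniqueness for nonzero dynamic contact angles, `n ∈ (0,1)`: problem (P) has at most
one solution. -/
theorem thinfilm_uniqueness_n_lt_one (n θ : ℝ) (hn0 : 0 < n) (hn1 : n < 1) (hθ : 0 < θ) :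
    ∀ H₁ H₂ : ℝ → ℝ, IsSolP n θ H₁ → IsSolP n θ H₂ →
      Set.EqOn H₁ H₂ (Set.Icc 0 1) := by
  intro H₁ H₂ h₁ h₂
  have hIoo : EqOn H₁ H₂ (Ioo 0 1) := fun x hx =>
    le_antisymm (h₁.le_of_isSolP hn0.le hn1.le hθ h₂ hx) (h₂.le_of_isSolP hn0.le hn1.le hθ h₁ hx)
  exact hIoo.of_subset_closure h₁.1.continuousOn h₂.1.continuousOn Ioo_subset_Icc_self
    (closure_Ioo zero_ne_one).ge
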